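/- Local homogeneity for Banach-space representations: let G be a compact topological group, E a complex Banach space, and ρ a norm-continuous representation of G on E. Then there exists ε > 0 such that for every norm-continuous representation ρ' of G on E with sup_{g ∈ G} ‖ρ'(g) − ρ(g)‖ < ε there is an invertible bounded operator V ∈ GL(E) with ρ'(g) = V ρ(g) V⁻¹ for all g ∈ G. In particular, the orbit of ρ under conjugation by GL(E) is open in the set of norm-continuous representations with the supremum metric. -/

import Mathlib

/-!
Averaging over the Haar probability measure produces the intertwiner
`V = ∫ ρ'(g) ρ(g)⁻¹ dg`, which satisfies `ρ'(h) V = V ρ(h)` by invariance of the measure.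
Since `ρ'(g) ρ(g)⁻¹ - 1 = (ρ'(g) - ρ(g)) ρ(g)⁻¹`, the average lies within
`sup ‖ρ' - ρ‖ · sup ‖ρ‖` of `1`, so it is invertible by the Neumann series once that
product is below `1`.
-/

open MeasureTheory

theorem exists_isProbabilityMeasure_isMulLeftInvariant (G : Type*) [Group G]
    [TopologicalSpace G] [IsTopologicalGroup G] [CompactSpace G]
    [MeasurableSpace G] [BorelSpace G] :
    ∃ μ : Measure G, IsProbabilityMeasure μ ∧ μ.IsMulLeftInvariant := by
  refine ⟨Measure.haarMeasure ⊤, ⟨?_⟩, inferInstance⟩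
  rw [← TopologicalSpace.PositiveCompacts.coe_top (α := G)]
  exact Measure.haarMeasure_self

theorem norm_integral_sub_le_of_forall_norm_sub_le {α E : Type*} [MeasurableSpace α]
    {μ : Measure α} [IsProbabilityMeasure μ] [NormedAddCommGroup E] [NormedSpace ℝ E]
    [CompleteSpace E]
    {f : α → E} {a : E} {C : ℝ} (hf : Integrable f μ) (hC : ∀ x, ‖f x - a‖ ≤ C) :
    ‖∫ x, f x ∂μ - a‖ ≤ C := by
  have hsub : ∫ x, f x ∂μ - a = ∫ x, (f x - a) ∂μ := by
    rw [integral_sub hf (integrable_const a), integral_const, probReal_univ, one_smul]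
  rw [hsub]
  simpa using norm_integral_le_of_norm_le_const (μ := μ) (Filter.Eventually.of_forall hC)

section Intertwiner

variable {G A : Type*} [Group G] [TopologicalSpace G] [MeasurableSpace G]
  [NormedRing A]

noncomputable def intertwiningAverage [NormedAlgebra ℝ A] (μ : Measure G) (ρ ρ' : G →* Aˣ) :
    A :=
  ∫ g, (ρ' g : A) * ρ g⁻¹ ∂μ

variable [IsTopologicalGroup G] [CompactSpace G] [BorelSpace G] {μ : Measure G}
  {ρ ρ' : G →* Aˣ}

theorem integrable_map_mul_map_inv [IsFiniteMeasure μ]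
    (hρ : Continuous fun g => (ρ g : A))
    (hρ' : Continuous fun g => (ρ' g : A)) :
    Integrable (fun g => (ρ' g : A) * ρ g⁻¹) μ :=
  (hρ'.mul (hρ.comp continuous_inv)).integrable_of_hasCompactSupport (.of_compactSpace _)

variable [NormedAlgebra ℝ A]

theorem mul_intertwiningAverage [IsFiniteMeasure μ] [μ.IsMulLeftInvariant]
    (hρ : Continuous fun g => (ρ g : A))
    (hρ' : Continuous fun g => (ρ' g : A)) (h : G) :
    ρ' h * intertwiningAverage μ ρ ρ' = intertwiningAverage μ ρ ρ' * ρ h := by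
  have hF := integrable_map_mul_map_inv (μ := μ) hρ hρ'
  have hshift : ∀ g,
      (ρ' (h * g) : A) * ρ (h * g)⁻¹ = ρ' h * (ρ' g * ρ g⁻¹) * ρ h⁻¹ := by
    intro g
    simp only [map_mul, mul_inv_rev, Units.val_mul, mul_assoc]
  have hconj : intertwiningAverage μ ρ ρ' = ρ' h * intertwiningAverage μ ρ ρ' * ρ h⁻¹ :=
    calc intertwiningAverage μ ρ ρ' = ∫ g, (ρ' (h * g) : A) * ρ (h * g)⁻¹ ∂μ :=
          (integral_mul_left_eq_self _ h).symm
      _ = ∫ g, ρ' h * ((ρ' g : A) * ρ g⁻¹) * ρ h⁻¹ ∂μ := by simp only [hshift]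
      _ = ρ' h * intertwiningAverage μ ρ ρ' * ρ h⁻¹ := by
          rw [integral_mul_const_of_integrable (hF.const_mul _),
            integral_const_mul_of_integrable hF, intertwiningAverage]
  calc ρ' h * intertwiningAverage μ ρ ρ'
      = ρ' h * intertwiningAverage μ ρ ρ' * ρ h⁻¹ * ρ h := by
        rw [mul_assoc _ (ρ h⁻¹ : A), ← Units.val_mul, ← map_mul, inv_mul_cancel, map_one,
          Units.val_one, mul_one]
    _ = intertwiningAverage μ ρ ρ' * ρ h := by rw [← hconj]

theorem norm_intertwiningAverage_sub_one_le [CompleteSpace A] [IsProbabilityMeasure μ]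
    (hρ : Continuous fun g => (ρ g : A)) (hρ' : Continuous fun g => (ρ' g : A)) {δ M : ℝ}
    (hδ : ∀ g, ‖(ρ' g : A) - ρ g‖ ≤ δ) (hM : ∀ g, ‖(ρ g : A)‖ ≤ M) :
    ‖intertwiningAverage μ ρ ρ' - 1‖ ≤ δ * M := by
  refine norm_integral_sub_le_of_forall_norm_sub_le
    (integrable_map_mul_map_inv hρ hρ') fun g => ?_
  have hfactor : (ρ' g : A) * ρ g⁻¹ - 1 = ((ρ' g : A) - ρ g) * ρ g⁻¹ := by
    rw [sub_mul, ← Units.val_mul (ρ g), ← map_mul, mul_inv_cancel, map_one, Units.val_one]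
  rw [hfactor]
  exact (norm_mul_le _ _).trans
    (mul_le_mul (hδ g) (hM _) (norm_nonneg _) ((norm_nonneg _).trans (hδ g)))

end Intertwiner

theorem MonoidHom.exists_conj_of_norm_sub_le {G A : Type*} [Group G] [TopologicalSpace G]
    [IsTopologicalGroup G] [CompactSpace G] [NormedRing A] [NormedAlgebra ℝ A]
    [CompleteSpace A] {ρ ρ' : G →* Aˣ} (hρ : Continuous fun g => (ρ g : A))
    (hρ' : Continuous fun g => (ρ' g : A))
    {δ M : ℝ} (hδ : ∀ g, ‖(ρ' g : A) - ρ g‖ ≤ δ) (hM : ∀ g, ‖(ρ g : A)‖ ≤ M)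
    (hδM : δ * M < 1) :
    ∃ V : Aˣ, ∀ g, (ρ' g : A) = V * ρ g * (V⁻¹ : Aˣ) := by
  borelize G
  obtain ⟨μ, _, _⟩ := exists_isProbabilityMeasure_isMulLeftInvariant G
  have hnear : ‖1 - intertwiningAverage μ ρ ρ'‖ < 1 := by
    rw [norm_sub_rev]
    exact (norm_intertwiningAverage_sub_one_le hρ hρ' hδ hM).trans_lt hδM
  refine ⟨Units.oneSub _ hnear, fun g => ?_⟩
  rw [Units.eq_mul_inv_iff_mul_eq, Units.val_oneSub, sub_sub_cancel]
  exact mul_intertwiningAverage hρ hρ' g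

theorem locally_homogeneous_rep_banach
    {G : Type*} [Group G] [TopologicalSpace G] [IsTopologicalGroup G] [CompactSpace G]
    {E : Type*} [NormedAddCommGroup E] [NormedSpace ℂ E] [CompleteSpace E]
    (ρ : G →* (E →L[ℂ] E)ˣ) (hρ : Continuous fun g : G => (ρ g : E →L[ℂ] E)) :
    ∃ ε > (0 : ℝ), ∀ ρ' : G →* (E →L[ℂ] E)ˣ,
      (Continuous fun g : G => (ρ' g : E →L[ℂ] E)) →
      (⨆ g : G, ‖(ρ' g : E →L[ℂ] E) - (ρ g : E →L[ℂ] E)‖) < ε →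
      ∃ V : (E →L[ℂ] E)ˣ, ∀ g : G,
        (ρ' g : E →L[ℂ] E) = (V : E →L[ℂ] E) * (ρ g : E →L[ℂ] E) * ((V⁻¹ : (E →L[ℂ] E)ˣ) : E →L[ℂ] E) := by
  obtain ⟨C, hC⟩ := hρ.bounded_above_of_compact_support (.of_compactSpace _)
  have hM : ∀ g, ‖(ρ g : E →L[ℂ] E)‖ ≤ max C 1 :=
    fun g => (hC g).trans (le_max_left _ _)
  refine ⟨(max C 1)⁻¹, by positivity, fun ρ' hρ' hsup => ?_⟩
  have hδ : ∀ g,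
      ‖(ρ' g : E →L[ℂ] E) - ρ g‖ ≤ ⨆ g : G, ‖(ρ' g : E →L[ℂ] E) - ρ g‖ :=
    le_ciSup (isCompact_range (hρ'.sub hρ).norm).bddAbove
  exact MonoidHom.exists_conj_of_norm_sub_le hρ hρ' hδ hM
    ((lt_inv_mul_iff₀' (by positivity)).mp (by rwa [mul_one]))
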